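/- Let λ > 0, φ ∈ (0, π), and x ∈ ℝ. Then |P_n^{(λ)}(x; φ)| ≤ (1+n)^σ for all n ∈ ℕ₀, where σ = 2|λ+ix| + 1. -/

import Mathlib

open Complex Finset

/-- The Pochhammer symbol (rising factorial) `(z)_n = z(z+1)⋯(z+n-1)`. -/
noncomputable def poch (z : ℂ) (n : ℕ) : ℂ := ∏ i ∈ Finset.range n, (z + i)

/-- The Meixner–Pollaczek polynomial `P_n^{(λ)}(x; φ)` via its terminating
`₂F₁(-n, λ+ix; 2λ; 1-e^{-2iφ})` representation. -/
noncomputable def MP (n : ℕ) (lam : ℝ) (x : ℝ) (phi : ℝ) : ℂ :=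
  poch ((2 * lam : ℝ) : ℂ) n / (n.factorial : ℂ) * Complex.exp (Complex.I * n * phi) *
    ∑ k ∈ Finset.range (n + 1),
      poch (-(n : ℂ)) k * poch ((lam : ℂ) + Complex.I * x) k /
          (poch ((2 * lam : ℝ) : ℂ) k * k.factorial) *
        (1 - Complex.exp (-2 * Complex.I * phi)) ^ k

/-! With `z = 1 - e^{-2iφ}`, expanding `(1 - z)^m` binomially and collapsing the resulting
triple sum with the Chu–Vandermonde identity `(a + b)_r / r! = ∑_{j+l=r} (a)_j/j! · (b)_l/l!`
turns the terminating `₂F₁` into the convolution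
`∑_{k+l=n} (λ+ix)_k/k! · (λ-ix)_l/l! · e^{iφ(l-k)}`.
Each factor obeys `|(v)_m|/m! ≤ (1+m)^{|v|}` (by induction, the step being Bernoulli's
inequality), `|λ-ix| = |λ+ix|`, and the `n + 1` terms give the extra factor `1 + n`. -/

open Polynomial Nat

theorem sum_antidiagonal_sum_antidiagonal_fst {M : Type*} [AddCommMonoid M] (n : ℕ)
    (f : ℕ → ℕ → ℕ → M) :
    ∑ p ∈ antidiagonal n, ∑ q ∈ antidiagonal p.1, f q.1 q.2 p.2 =
      ∑ p ∈ antidiagonal n, ∑ q ∈ antidiagonal p.2, f p.1 q.1 q.2 := by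
  rw [sum_sigma', sum_sigma']
  refine sum_nbij' (fun x => ⟨(x.2.1, x.2.2 + x.1.2), (x.2.2, x.1.2)⟩)
    (fun x => ⟨(x.1.1 + x.2.1, x.2.2), (x.1.1, x.2.1)⟩) ?_ ?_ ?_ ?_ ?_
  all_goals
    rintro ⟨⟨a, b⟩, ⟨c, d⟩⟩
    simp only [mem_sigma, HasAntidiagonal.mem_antidiagonal]
  all_goals grind

lemma poch_eq_eval_ascPochhammer (z : ℂ) (n : ℕ) : poch z n = (ascPochhammer ℂ n).eval z := by
  induction n with
  | zero => simp [poch]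
  | succ n ih => rw [poch, prod_range_succ, ← poch, ih, ascPochhammer_succ_eval]

lemma poch_add (z : ℂ) (m n : ℕ) : poch z (m + n) = poch z m * poch (z + m) n := by
  rw [poch, prod_range_add]
  simp only [poch, cast_add, add_assoc]

lemma poch_eq_neg_one_pow_mul_eval_descPochhammer (z : ℂ) (n : ℕ) :
    poch z n = (-1) ^ n * (descPochhammer ℂ n).eval (-z) := by
  rw [poch_eq_eval_ascPochhammer, ← ascPochhammer_eval_neg_eq_descPochhammer, neg_neg]

lemma poch_neg_natCast (n k : ℕ) : poch (-n) k = (-1) ^ k * n.descFactorial k := by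
  rw [poch_eq_neg_one_pow_mul_eval_descPochhammer, neg_neg, descPochhammer_eval_eq_descFactorial]

lemma poch_ne_zero_of_re_pos {z : ℂ} (hz : 0 < z.re) (n : ℕ) : poch z n ≠ 0 :=
  prod_ne_zero_iff.2 fun i _ h => by
    have := congrArg re h
    simp only [add_re, natCast_re, zero_re] at this
    linarith [i.cast_nonneg (α := ℝ)]

lemma descPochhammer_int_smeval {R : Type*} [CommRing R] (r : R) (n : ℕ) :
    (descPochhammer ℤ n).smeval r = (descPochhammer R n).eval r := by
  rw [← aeval_eq_smeval, aeval_def, eval₂_eq_eval_map, descPochhammer_map]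

theorem poch_add_div_factorial (x y : ℂ) (n : ℕ) :
    poch (x + y) n / n ! = ∑ p ∈ antidiagonal n, poch x p.1 / p.1 ! * (poch y p.2 / p.2 !) := by
  have key := Ring.descPochhammer_smeval_add (r := -x) (s := -y) n (Commute.all _ _)
  simp only [descPochhammer_int_smeval] at key
  rw [poch_eq_neg_one_pow_mul_eval_descPochhammer, neg_add, key, mul_sum, sum_div]
  refine sum_congr rfl fun ⟨i, j⟩ hp => ?_
  obtain rfl : i + j = n := mem_antidiagonal.1 hp
  rw [poch_eq_neg_one_pow_mul_eval_descPochhammer, poch_eq_neg_one_pow_mul_eval_descPochhammer,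
    pow_add, cast_add_choose]
  have := (i + j).factorial_ne_zero
  field_simp

lemma poch_div_factorial_mul_choose (a : ℂ) (k j : ℕ) :
    poch a (k + j) / (k + j)! * (k + j).choose k = poch a k / k ! * (poch (a + k) j / j !) := by
  rw [poch_add, cast_add_choose]
  have := (k + j).factorial_ne_zero
  field_simp

lemma one_sub_pow_eq_sum_antidiagonal (z : ℂ) (m : ℕ) :
    (1 - z) ^ m = ∑ q ∈ antidiagonal m, (-z) ^ q.1 * m.choose q.1 := by
  rw [sub_eq_neg_add, (Commute.all _ _).add_pow']
  simp [nsmul_eq_mul, mul_comm]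

theorem sum_antidiagonal_poch_mul_one_sub_pow (a b z : ℂ) (n : ℕ) (h : poch (a + b) n ≠ 0) :
    ∑ p ∈ antidiagonal n, poch a p.1 / p.1 ! * (poch b p.2 / p.2 !) * (1 - z) ^ p.1 =
      poch (a + b) n / n ! * ∑ k ∈ range (n + 1),
        poch (-n) k * poch a k / (poch (a + b) k * k !) * z ^ k := by
  calc _ = ∑ p ∈ antidiagonal n, ∑ q ∈ antidiagonal p.1,
        poch a q.1 / q.1 ! * (-z) ^ q.1 * (poch (a + q.1) q.2 / q.2 ! * (poch b p.2 / p.2 !)) := by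
        refine sum_congr rfl fun ⟨m, l⟩ _ => ?_
        rw [one_sub_pow_eq_sum_antidiagonal, mul_sum]
        refine sum_congr rfl fun ⟨k, j⟩ hq => ?_
        obtain rfl : k + j = m := mem_antidiagonal.1 hq
        linear_combination (-z) ^ k * (poch b l / l !) * poch_div_factorial_mul_choose a k j
    _ = ∑ p ∈ antidiagonal n, ∑ q ∈ antidiagonal p.2,
        poch a p.1 / p.1 ! * (-z) ^ p.1 * (poch (a + p.1) q.1 / q.1 ! * (poch b q.2 / q.2 !)) :=
      sum_antidiagonal_sum_antidiagonal_fst n fun k j l =>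
        poch a k / k ! * (-z) ^ k * (poch (a + k) j / j ! * (poch b l / l !))
    _ = ∑ p ∈ antidiagonal n, poch a p.1 / p.1 ! * (-z) ^ p.1 * (poch (a + b + p.1) p.2 / p.2 !) := by
        refine sum_congr rfl fun p _ => ?_
        rw [← mul_sum, add_right_comm, poch_add_div_factorial]
    _ = _ := by
        rw [Nat.sum_antidiagonal_eq_sum_range_succ (fun k r =>
          poch a k / k ! * (-z) ^ k * (poch (a + b + k) r / r !)), mul_sum]
        refine sum_congr rfl fun k hk => ?_
        have hkn : k ≤ n := Nat.lt_succ_iff.1 (mem_range.1 hk)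
        have hsplit : poch (a + b) n = poch (a + b) k * poch (a + b + k) (n - k) := by
          rw [← poch_add, Nat.add_sub_cancel' hkn]
        have hk0 : poch (a + b) k ≠ 0 := left_ne_zero_of_mul (hsplit ▸ h)
        have hfact : ((n - k)! : ℂ) * n.descFactorial k = n ! := by
          exact_mod_cast Nat.factorial_mul_descFactorial hkn
        have hdesc : (n.descFactorial k : ℂ) ≠ 0 := by
          exact_mod_cast (Nat.descFactorial_pos.2 hkn).ne'
        rw [poch_neg_natCast, hsplit, ← hfact, neg_pow]
        field_simp

lemma add_sub_one_mul_rpow_le {x s : ℝ} (hx : 0 < x) (hs : 0 ≤ s) :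
    (x + s - 1) * x ^ s ≤ x * (x + 1) ^ s := by
  rcases le_total s 1 with hs1 | hs1
  · gcongr <;> linarith
  · have hbern : 1 + s * x⁻¹ ≤ (1 + x⁻¹) ^ s :=
      one_add_mul_self_le_rpow_one_add (by linarith [inv_pos.2 hx]) hs1
    have hsplit : (x + 1) ^ s = x ^ s * (1 + x⁻¹) ^ s := by
      rw [← Real.mul_rpow hx.le (by positivity), mul_add, mul_inv_cancel₀ hx.ne', mul_one]
    rw [hsplit]
    calc (x + s - 1) * x ^ s ≤ x * (1 + s * x⁻¹) * x ^ s := by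
          gcongr; rw [mul_add, mul_one, mul_left_comm, mul_inv_cancel₀ hx.ne']; linarith
      _ ≤ x * (1 + x⁻¹) ^ s * x ^ s := by gcongr
      _ = _ := by ring

lemma prod_range_add_le_factorial_mul_rpow {s : ℝ} (hs : 0 ≤ s) (k : ℕ) :
    ∏ i ∈ range k, (s + i) ≤ k ! * (1 + k) ^ s := by
  induction k with
  | zero => simp
  | succ k ih =>
    have step := add_sub_one_mul_rpow_le (x := k + 1) (by positivity) hs
    rw [prod_range_succ, factorial_succ]
    push_cast
    calc (∏ i ∈ range k, (s + i)) * (s + k) ≤ k ! * (1 + k) ^ s * (s + k) := by gcongr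
      _ = k ! * ((k + 1 + s - 1) * (k + 1) ^ s) := by ring_nf
      _ ≤ k ! * ((k + 1) * (k + 1 + 1) ^ s) := by gcongr
      _ = _ := by ring_nf

lemma norm_poch_div_factorial_le (z : ℂ) (k : ℕ) : ‖poch z k / (k ! : ℂ)‖ ≤ (1 + k) ^ ‖z‖ := by
  have hprod : ‖poch z k‖ ≤ ∏ i ∈ range k, (‖z‖ + i) := by
    rw [poch, norm_prod]
    gcongr with i
    exact (norm_add_le _ _).trans_eq (by rw [norm_natCast])
  rw [norm_div, norm_natCast, div_le_iff₀' (by positivity)]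
  exact hprod.trans (prod_range_add_le_factorial_mul_rpow (norm_nonneg z) k)

theorem norm_sum_antidiagonal_poch_le (a b : ℂ) (n : ℕ) (w : ℕ × ℕ → ℂ)
    (hw : ∀ p ∈ antidiagonal n, ‖w p‖ ≤ 1) :
    ‖∑ p ∈ antidiagonal n, poch a p.1 / p.1 ! * (poch b p.2 / p.2 !) * w p‖ ≤
      (1 + n) ^ (‖a‖ + ‖b‖ + 1) := by
  have hn : (0 : ℝ) < 1 + n := by positivity
  have hterm : ∀ p ∈ antidiagonal n,
      ‖poch a p.1 / p.1 ! * (poch b p.2 / p.2 !) * w p‖ ≤ (1 + n) ^ ‖a‖ * (1 + n) ^ ‖b‖ := by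
    rintro ⟨i, j⟩ hp
    obtain rfl : i + j = n := mem_antidiagonal.1 hp
    rw [norm_mul, norm_mul, ← mul_one ((1 + _) ^ ‖a‖ * _)]
    gcongr
    · exact (norm_poch_div_factorial_le a i).trans (by gcongr; simp)
    · exact (norm_poch_div_factorial_le b j).trans (by gcongr; simp)
    · exact hw _ hp
  calc _ ≤ ∑ p ∈ antidiagonal n, (1 + n : ℝ) ^ ‖a‖ * (1 + n) ^ ‖b‖ :=
        (norm_sum_le _ _).trans (sum_le_sum hterm)
    _ = _ := by
      rw [sum_const, card_antidiagonal, nsmul_eq_mul, Real.rpow_add hn, Real.rpow_add hn,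
        Real.rpow_one]
      push_cast
      ring

lemma MP_eq_sum_antidiagonal (lam : ℝ) (hlam : 0 < lam) (x phi : ℝ) (n : ℕ) :
    MP n lam x phi = ∑ p ∈ antidiagonal n,
      poch (lam + I * x) p.1 / p.1 ! * (poch (lam - I * x) p.2 / p.2 !) *
        cexp (I * phi * (p.2 - p.1)) := by
  have hc : ((2 * lam : ℝ) : ℂ) = (lam + I * x) + (lam - I * x) := by push_cast; ring
  have hc0 : poch ((lam + I * x) + (lam - I * x)) n ≠ 0 :=
    hc ▸ poch_ne_zero_of_re_pos (by simpa using hlam) n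
  rw [MP, hc, mul_right_comm, ← sum_antidiagonal_poch_mul_one_sub_pow _ _ _ n hc0, sum_mul]
  refine sum_congr rfl fun ⟨i, j⟩ hp => ?_
  obtain rfl : i + j = n := mem_antidiagonal.1 hp
  have hexp : cexp (I * ↑(i + j) * phi) * cexp (-2 * I * phi) ^ i = cexp (I * phi * (j - i)) := by
    rw [← exp_nat_mul, ← exp_add]
    push_cast
    ring_nf
  rw [sub_sub_cancel, ← hexp]
  ring

theorem MP_bound_general (lam : ℝ) (hlam : 0 < lam) (phi : ℝ)
    (x : ℝ) :
    ∀ n : ℕ, ‖MP n lam x phi‖ ≤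
      (1 + (n : ℝ)) ^ (2 * ‖(lam : ℂ) + Complex.I * x‖ + 1) := by
  intro n
  have hconj : ‖(lam : ℂ) - I * x‖ = ‖(lam : ℂ) + I * x‖ := by
    rw [← norm_conj]
    simp [sub_eq_add_neg]
  have hunit : ∀ p ∈ antidiagonal n, ‖cexp (I * phi * ((p.2 : ℂ) - p.1))‖ ≤ 1 := fun p _ => by
    rw [norm_exp]
    simp
  rw [MP_eq_sum_antidiagonal lam hlam x phi n, two_mul]
  exact (norm_sum_antidiagonal_poch_le _ _ n _ hunit).trans_eq (by rw [hconj])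

theorem MP_bound (lam : ℝ) (hlam : 0 < lam) (phi : ℝ) (hphi : phi ∈ Set.Ioo 0 Real.pi)
    (x : ℝ) :
    ∀ n : ℕ, ‖MP n lam x phi‖ ≤
      (1 + (n : ℝ)) ^ (2 * ‖(lam : ℂ) + Complex.I * x‖ + 1) :=
  MP_bound_general lam hlam phi x
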